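/- Let ν_s be a positive measure on the unit circle 𝕋 with infinite support which is singular with respect to the normalized Lebesgue measure m on 𝕋. Then lim_{n→∞} λ_n(ν_s) = 0, where λ_n(ν_s) is the smallest eigenvalue of the (n+1)×(n+1) truncation of the moment matrix T(ν_s). -/

import Mathlib

open MeasureTheory Filter Matrix
open scoped ComplexOrder Topology

noncomputable section

/-- The `(n+1) × (n+1)` leading principal truncation of an infinite matrix. -/
def trunc (M : ℕ → ℕ → ℂ) (n : ℕ) : Matrix (Fin (n + 1)) (Fin (n + 1)) ℂ :=
  Matrix.of fun i j => M i j

/-- An infinite matrix is Hermitian positive definite (HPD) if every leading principal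
truncation is positive definite (equivalently, it is Hermitian and all leading
principal minors are positive). -/
def IsHPD (M : ℕ → ℕ → ℂ) : Prop := ∀ n, (trunc M n).PosDef

/-- The smallest eigenvalue of the truncation `M_n`, as the minimum of the Rayleigh
quotient `v M_n v^* / (v v^*)` over nonzero `v ∈ ℂ^{n+1}`. -/
def smallestEig (M : ℕ → ℕ → ℂ) (n : ℕ) : ℝ :=
  ⨅ v : {v : Fin (n + 1) → ℂ // v ≠ 0},
    (∑ i : Fin (n + 1), ∑ j : Fin (n + 1), v.1 i * M i j * (starRingEnd ℂ) (v.1 j)).re / ∑ i, Complex.normSq (v.1 i)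

/-- `B` is the transition matrix of `M`: upper triangular, positive diagonal,
with `B_nᵗ M_n conj(B_n) = I` for all `n`. -/
def IsTransition (M B : ℕ → ℕ → ℂ) : Prop :=
  (∀ k n, n < k → B k n = 0) ∧
  (∀ n, 0 < (B n n).re ∧ (B n n).im = 0) ∧
  (∀ n, (trunc B n)ᵀ * trunc M n * (trunc B n).map (starRingEnd ℂ) = 1)

/-- Operator norm of a finite matrix acting on the Euclidean space `ℂ^n`. -/
def opNorm {n : ℕ} (A : Matrix (Fin n) (Fin n) ℂ) : ℝ :=
  ‖LinearMap.toContinuousLinearMap (Matrix.toEuclideanLin A)‖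


/-- The moment matrix of a measure on `ℂ`. -/
def momMat (ν : Measure ℂ) : ℕ → ℕ → ℂ :=
  fun i j => ∫ z, z ^ i * (starRingEnd ℂ) z ^ j ∂ν

/-- The normalized Lebesgue (arc-length) measure `dθ/(2π)` on the unit circle,
as a measure on `ℂ`. -/
def mCirc : Measure ℂ :=
  (ENNReal.ofReal (2 * Real.pi))⁻¹ •
    Measure.map (fun θ : ℝ => Complex.exp (θ * Complex.I))
      (volume.restrict (Set.Ioc 0 (2 * Real.pi)))

/-!
Push `ν` forward to `ρ = arg₊ ν` on `(-π, π]`. It is singular with respect to Lebesgue measure,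
so by Besicovitch differentiation `ρ` has density `0` at some `α`. Test the Rayleigh quotient
against the coefficients of `(1 + e^{-iα} z)ⁿ`: on the circle `|1 + e^{i(θ - α)}|²ⁿ` is `4ⁿ` times
the peak `((1 + cos (θ - α)) / 2)ⁿ`, while by Parseval the coefficients have squared norm
`C(2n, n) ≥ 4ⁿ / (2n + 1)`. Inside `(-π, π]` the superlevel sets of the peak above
`((1 + cos δ) / 2)ⁿ` lie in intervals around `α` of radius `< δ`, whose `ρ`-measure is at most
`ε` times their length. The layer-cake formula then bounds the quotient by
`(2n + 1) ((1 + cos δ) / 2)ⁿ ν(𝕋) + 2πε`.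
-/

open Set Complex Metric
open scoped Real ComplexConjugate

lemma exp_arg_mul_I_of_norm_eq_one {z : ℂ} (hz : ‖z‖ = 1) : exp (arg z * I) = z := by
  simpa [hz] using norm_mul_exp_arg_mul_I z

section RayleighQuotient

variable {ν : Measure ℂ}

lemma integrable_pow_mul_conj_pow [IsFiniteMeasure ν] (hν : ∀ᵐ z ∂ν, ‖z‖ = 1) (i j : ℕ) :
    Integrable (fun z => z ^ i * conj z ^ j) ν := by
  refine Integrable.mono' (integrable_const 1) (by fun_prop) ?_
  filter_upwards [hν] with z hz
  simp [hz]

lemma re_sum_mul_momMat_mul_conj [IsFiniteMeasure ν] (hν : ∀ᵐ z ∂ν, ‖z‖ = 1) {N : ℕ}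
    (v : Fin N → ℂ) :
    (∑ i : Fin N, ∑ j : Fin N, v i * momMat ν i j * conj (v j)).re =
      ∫ z, normSq (∑ i, v i * z ^ (i : ℕ)) ∂ν := by
  have hint (i j : Fin N) :
      Integrable (fun z => v i * (z ^ (i : ℕ) * conj z ^ (j : ℕ)) * conj (v j)) ν :=
    ((integrable_pow_mul_conj_pow hν i j).const_mul _).mul_const _
  have hsq (z : ℂ) :
      ∑ i : Fin N, ∑ j : Fin N, v i * (z ^ (i : ℕ) * conj z ^ (j : ℕ)) * conj (v j) =
        (normSq (∑ i, v i * z ^ (i : ℕ)) : ℂ) := by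
    simp only [← mul_conj, map_sum, map_mul, map_pow, Finset.sum_mul_sum]
    exact Finset.sum_congr rfl fun i _ => Finset.sum_congr rfl fun j _ => by ring
  calc (∑ i : Fin N, ∑ j : Fin N, v i * momMat ν i j * conj (v j)).re
      = (∫ z, ∑ i : Fin N, ∑ j : Fin N,
          v i * (z ^ (i : ℕ) * conj z ^ (j : ℕ)) * conj (v j) ∂ν).re := by
        rw [integral_finsetSum _ fun i _ => integrable_finsetSum _ fun j _ => hint i j]
        simp_rw [integral_finsetSum _ fun j _ => hint _ j, integral_mul_const,
          integral_const_mul, momMat]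
    _ = ∫ z, normSq (∑ i, v i * z ^ (i : ℕ)) ∂ν := by
        simp_rw [hsq, integral_complex_ofReal, ofReal_re]

lemma smallestEig_momMat_nonneg [IsFiniteMeasure ν] (hν : ∀ᵐ z ∂ν, ‖z‖ = 1) (n : ℕ) :
    0 ≤ smallestEig (momMat ν) n := by
  have : Nonempty {v : Fin (n + 1) → ℂ // v ≠ 0} := ⟨⟨1, one_ne_zero⟩⟩
  refine le_ciInf fun v => div_nonneg ?_ (Finset.sum_nonneg fun i _ => normSq_nonneg _)
  rw [re_sum_mul_momMat_mul_conj hν]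
  exact integral_nonneg fun z => normSq_nonneg _

lemma smallestEig_momMat_le [IsFiniteMeasure ν] (hν : ∀ᵐ z ∂ν, ‖z‖ = 1) {n : ℕ}
    {v : Fin (n + 1) → ℂ} (hv : v ≠ 0) :
    smallestEig (momMat ν) n ≤
      (∫ z, normSq (∑ i, v i * z ^ (i : ℕ)) ∂ν) / ∑ i, normSq (v i) := by
  rw [← re_sum_mul_momMat_mul_conj hν]
  refine ciInf_le ⟨0, ?_⟩ (⟨v, hv⟩ : {v : Fin (n + 1) → ℂ // v ≠ 0})
  rintro _ ⟨w, rfl⟩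
  refine div_nonneg ?_ (Finset.sum_nonneg fun i _ => normSq_nonneg _)
  rw [re_sum_mul_momMat_mul_conj hν]
  exact integral_nonneg fun z => normSq_nonneg _

lemma integral_normSq_sum_pow_eq_integral_map_arg (hν : ∀ᵐ z ∂ν, ‖z‖ = 1) {N : ℕ}
    (v : Fin N → ℂ) :
    ∫ z, normSq (∑ i, v i * z ^ (i : ℕ)) ∂ν =
      ∫ θ, normSq (∑ i, v i * exp ((i : ℕ) * θ * I)) ∂ν.map arg := by
  rw [integral_map measurable_arg.aemeasurable (by fun_prop)]
  refine integral_congr_ae ?_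
  filter_upwards [hν] with z hz
  simp_rw [mul_assoc _ _ I, exp_nat_mul, exp_arg_mul_I_of_norm_eq_one hz]

end RayleighQuotient

lemma integral_exp_int_mul_mul_I (m : ℤ) :
    ∫ u in (-π)..π, exp (m * u * I) = if m = 0 then (2 * π : ℂ) else 0 := by
  simp_rw [mul_right_comm _ _ I]
  split_ifs with hm
  · simp [hm, two_mul]
  have hc : (m : ℂ) * I ≠ 0 := mul_ne_zero (Int.cast_ne_zero.2 hm) I_ne_zero
  have hper : exp (m * I * π) = exp (m * I * (-π : ℝ)) := by
    rw [show (m : ℂ) * I * π = m * I * (-π : ℝ) + m * (2 * π * I) by push_cast; ring,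
      exp_add, exp_int_mul_two_pi_mul_I, mul_one]
  rw [integral_exp_mul_complex hc, hper, sub_self, zero_div]

lemma integral_normSq_sum_exp {N : ℕ} (c : Fin N → ℂ) :
    ∫ u in (-π)..π, normSq (∑ k, c k * exp ((k : ℕ) * u * I)) = 2 * π * ∑ k, normSq (c k) := by
  have hcont (k l : Fin N) : Continuous fun u : ℝ =>
      c k * conj (c l) * exp (((k : ℕ) - (l : ℕ) : ℤ) * u * I) := by fun_prop
  have hexpand (u : ℝ) : (normSq (∑ k, c k * exp ((k : ℕ) * u * I)) : ℂ) =
      ∑ k, ∑ l, c k * conj (c l) * exp (((k : ℕ) - (l : ℕ) : ℤ) * u * I) := by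
    rw [← mul_conj, map_sum, Finset.sum_mul_sum]
    refine Finset.sum_congr rfl fun k _ => Finset.sum_congr rfl fun l _ => ?_
    rw [map_mul, ← exp_conj]
    simp only [map_mul, conj_ofReal, conj_I, conj_natCast]
    rw [mul_mul_mul_comm, ← exp_add]
    push_cast
    ring_nf
  apply ofReal_injective
  rw [← intervalIntegral.integral_ofReal]
  simp_rw [hexpand]
  rw [intervalIntegral.integral_finsetSum fun k _ =>
    (continuous_finsetSum _ fun l _ => hcont k l).intervalIntegrable _ _]
  simp_rw [intervalIntegral.integral_finsetSum fun l _ => (hcont _ l).intervalIntegrable _ _,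
    intervalIntegral.integral_const_mul, integral_exp_int_mul_mul_I, sub_eq_zero,
    Nat.cast_inj, Fin.val_inj, mul_ite, mul_zero, Finset.sum_ite_eq, Finset.mem_univ, if_true,
    mul_conj]
  push_cast
  rw [Finset.mul_sum]
  exact Finset.sum_congr rfl fun k _ => by ring

def peak (α : ℝ) (n : ℕ) (θ : ℝ) : ℝ := ((1 + Real.cos (θ - α)) / 2) ^ n

def peakVec (α : ℝ) (n : ℕ) (k : Fin (n + 1)) : ℂ := n.choose k * exp (-((k : ℕ) * α * I))

lemma peakVec_ne_zero (α : ℝ) (n : ℕ) : peakVec α n ≠ 0 :=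
  fun h => by simpa [peakVec] using congrFun h 0

lemma peak_nonneg (α : ℝ) (n : ℕ) (θ : ℝ) : 0 ≤ peak α n θ :=
  pow_nonneg (by linarith [Real.neg_one_le_cos (θ - α)]) n

lemma peak_le_one (α : ℝ) (n : ℕ) (θ : ℝ) : peak α n θ ≤ 1 :=
  pow_le_one₀ (by linarith [Real.neg_one_le_cos (θ - α)]) (by linarith [Real.cos_le_one (θ - α)])

lemma continuous_peak (α : ℝ) (n : ℕ) : Continuous (peak α n) := by
  unfold peak; fun_prop

lemma normSq_one_add_exp_mul_I (x : ℝ) :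
    normSq (1 + exp (x * I)) = 4 * ((1 + Real.cos x) / 2) := by
  rw [exp_mul_I, ← ofReal_cos, ← ofReal_sin, normSq_apply]
  simp only [add_re, one_re, ofReal_re, add_im, one_im, ofReal_im, mul_re, mul_im, I_re, I_im]
  nlinarith [Real.sin_sq_add_cos_sq x]

lemma sum_peakVec_mul_exp (α : ℝ) (n : ℕ) (θ : ℝ) :
    ∑ k, peakVec α n k * exp ((k : ℕ) * θ * I) = (1 + exp ((θ - α : ℝ) * I)) ^ n := by
  simp only [peakVec]
  rw [Fin.sum_univ_eq_sum_range fun k => (n.choose k : ℂ) * exp (-(k * α * I)) * exp (k * θ * I),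
    add_comm (1 : ℂ), add_pow]
  refine Finset.sum_congr rfl fun k _ => ?_
  rw [one_pow, mul_one, ← exp_nat_mul, mul_assoc, ← exp_add]
  push_cast
  ring_nf

lemma normSq_sum_peakVec_mul_exp (α : ℝ) (n : ℕ) (θ : ℝ) :
    normSq (∑ k, peakVec α n k * exp ((k : ℕ) * θ * I)) = 4 ^ n * peak α n θ := by
  rw [sum_peakVec_mul_exp, map_pow, normSq_one_add_exp_mul_I, mul_pow, peak]

lemma sum_normSq_peakVec (α : ℝ) (n : ℕ) : ∑ k, normSq (peakVec α n k) = (2 * n).choose n := by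
  simp only [peakVec]
  rw [← Nat.sum_range_choose_sq, Nat.cast_sum,
    Fin.sum_univ_eq_sum_range fun k => normSq ((n.choose k : ℂ) * exp (-(k * α * I)))]
  refine Finset.sum_congr rfl fun k _ => ?_
  rw [map_mul, normSq_natCast, normSq_eq_norm_sq (exp _), neg_mul_eq_neg_mul,
    ← ofReal_natCast, ← ofReal_mul, ← ofReal_neg, norm_exp_ofReal_mul_I]
  push_cast
  ring

lemma integral_peak (α : ℝ) (n : ℕ) :
    ∫ θ in Ioc (-π) π, peak α n θ = 2 * π * (2 * n).choose n / 4 ^ n := by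
  rw [eq_div_iff (by positivity), ← intervalIntegral.integral_of_le (by linarith [Real.pi_pos]),
    ← intervalIntegral.integral_mul_const, ← sum_normSq_peakVec α n,
    ← integral_normSq_sum_exp]
  simp_rw [normSq_sum_peakVec_mul_exp, mul_comm]

lemma integral_le_of_measure_lt_le {X : Type*} [MeasurableSpace X] {ρ μ : Measure X}
    [IsFiniteMeasure ρ] {f : X → ℝ} (hf : 0 ≤ f) (hfm : Measurable f) (hfρ : Integrable f ρ)
    (hfμ : Integrable f μ) {q ε : ℝ} (hq : 0 ≤ q) (hε : 0 ≤ ε)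
    (h : ∀ t, q < t → ρ {x | t < f x} ≤ ENNReal.ofReal ε * μ {x | t < f x}) :
    ∫ x, f x ∂ρ ≤ q * ρ.real univ + ε * ∫ x, f x ∂μ := by
  have hlevel (t : ℝ) : ρ {x | t < f x} ≤
      (Iic q).indicator (fun _ => ρ univ) t + ENNReal.ofReal ε * μ {x | t < f x} := by
    by_cases htq : t ≤ q
    · rw [indicator_of_mem (mem_Iic.2 htq)]
      exact le_add_right (measure_mono (subset_univ _))
    · exact (h t (not_le.1 htq)).trans le_add_self
  have hlintegral : ∫⁻ x, ENNReal.ofReal (f x) ∂ρ ≤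
      ENNReal.ofReal q * ρ univ + ENNReal.ofReal ε * ∫⁻ x, ENNReal.ofReal (f x) ∂μ := by
    rw [lintegral_eq_lintegral_meas_lt ρ (.of_forall hf) hfm.aemeasurable,
      lintegral_eq_lintegral_meas_lt μ (.of_forall hf) hfm.aemeasurable]
    refine (lintegral_mono hlevel).trans_eq ?_
    rw [lintegral_add_left (measurable_const.indicator measurableSet_Iic),
      lintegral_const_mul' _ _ ENNReal.ofReal_ne_top, lintegral_indicator measurableSet_Iic,
      setLIntegral_const, Measure.restrict_apply measurableSet_Iic, Iic_inter_Ioi,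
      Real.volume_Ioc, sub_zero, mul_comm]
  rw [← ofReal_integral_eq_lintegral_ofReal hfρ (.of_forall hf),
    ← ofReal_integral_eq_lintegral_ofReal hfμ (.of_forall hf), ← ofReal_measureReal,
    ← ENNReal.ofReal_mul hq, ← ENNReal.ofReal_mul hε, ← ENNReal.ofReal_add (by positivity)
      (mul_nonneg hε (integral_nonneg hf))] at hlintegral
  exact (ENNReal.ofReal_le_ofReal_iff (add_nonneg (mul_nonneg hq measureReal_nonneg)
    (mul_nonneg hε (integral_nonneg hf)))).1 hlintegral

section LevelSets

variable {α c : ℝ}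

lemma mem_closedBall_arccos_of_lt_cos (hα : |α| < π / 2) (hc : 0 ≤ c) {θ : ℝ}
    (hθ : θ ∈ Ioc (-π) π) (h : c < Real.cos (θ - α)) : θ ∈ closedBall α (Real.arccos c) := by
  rw [mem_closedBall, Real.dist_eq]
  by_contra! hr
  have hc1 : c ≤ 1 := h.le.trans (Real.cos_le_one _)
  rw [← Real.cos_abs] at h
  by_cases hπ : |θ - α| ≤ π
  · have := Real.cos_le_cos_of_nonneg_of_le_pi (Real.arccos_nonneg c) hπ hr.le
    rw [Real.cos_arccos (by linarith) hc1] at this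
    linarith
  · have hθα : |θ - α| ≤ π + π / 2 := (abs_sub θ α).trans
      (add_le_add (abs_le.2 ⟨hθ.1.le, hθ.2⟩) hα.le)
    linarith [Real.cos_nonpos_of_pi_div_two_le_of_le (by linarith) hθα]

lemma ball_arccos_subset (hα : |α| < π / 2) (hc : 0 ≤ c) (hc1 : c ≤ 1) :
    ball α (Real.arccos c) ⊆ {θ | c < Real.cos (θ - α)} ∩ Ioc (-π) π := by
  intro θ hθ
  rw [mem_ball, Real.dist_eq] at hθ
  have hr : Real.arccos c ≤ π / 2 := Real.arccos_le_pi_div_two.2 hc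
  refine ⟨?_, ?_⟩
  · have := Real.cos_lt_cos_of_nonneg_of_le_pi (abs_nonneg _) (Real.arccos_le_pi c) hθ
    rwa [Real.cos_abs, Real.cos_arccos (by linarith) hc1] at this
  · obtain ⟨h1, h2⟩ := abs_lt.1 hθ
    obtain ⟨h3, h4⟩ := abs_lt.1 hα
    constructor <;> linarith

variable {ρ : Measure ℝ} {δ ε : ℝ}

lemma measure_lt_cos_sub_le (hρ : ρ (Ioc (-π) π)ᶜ = 0) (hα : |α| < π / 2) (hδ : 0 < δ)
    (hδπ : δ ≤ π / 2)
    (hball : ∀ r, 0 < r → r < δ → ρ (closedBall α r) ≤ ENNReal.ofReal ε * volume (closedBall α r))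
    (hc : Real.cos δ < c) :
    ρ {θ | c < Real.cos (θ - α)} ≤
      ENNReal.ofReal ε * volume.restrict (Ioc (-π) π) {θ | c < Real.cos (θ - α)} := by
  have hc0 : 0 ≤ c := (Real.cos_nonneg_of_neg_pi_div_two_le_of_le (by linarith) hδπ).trans hc.le
  rcases le_or_gt 1 c with hc1 | hc1
  · have : {θ | c < Real.cos (θ - α)} = ∅ :=
      eq_empty_of_forall_notMem fun θ hθ => (hc1.trans_lt hθ).not_ge (Real.cos_le_one _)
    simp [this]
  set r := Real.arccos c
  have hr : 0 < r := Real.arccos_pos.2 hc1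
  have hrδ : r < δ := by
    simpa [Real.arccos_cos hδ.le (by linarith)] using
      Real.arccos_lt_arccos (by linarith [Real.neg_one_le_cos δ]) hc hc1.le
  calc ρ {θ | c < Real.cos (θ - α)} ≤ ρ (closedBall α r ∪ (Ioc (-π) π)ᶜ) :=
        measure_mono fun θ hθ => (em (θ ∈ Ioc (-π) π)).imp
          (fun h => mem_closedBall_arccos_of_lt_cos hα hc0 h hθ) id
    _ ≤ ρ (closedBall α r) := (measure_union_le _ _).trans (by rw [hρ, add_zero])
    _ ≤ ENNReal.ofReal ε * volume (ball α r) := by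
        rw [Real.volume_ball, ← Real.volume_closedBall]; exact hball r hr hrδ
    _ ≤ _ := by
        rw [Measure.restrict_apply' measurableSet_Ioc]
        exact mul_le_mul_right (measure_mono (ball_arccos_subset hα hc0 hc1.le)) _

lemma measure_lt_peak_le (hρ : ρ (Ioc (-π) π)ᶜ = 0) (hα : |α| < π / 2) (hδ : 0 < δ)
    (hδπ : δ ≤ π / 2)
    (hball : ∀ r, 0 < r → r < δ → ρ (closedBall α r) ≤ ENNReal.ofReal ε * volume (closedBall α r))
    {n : ℕ} {t : ℝ} (ht : ((1 + Real.cos δ) / 2) ^ n < t) :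
    ρ {θ | t < peak α n θ} ≤
      ENNReal.ofReal ε * volume.restrict (Ioc (-π) π) {θ | t < peak α n θ} := by
  suffices ∃ c, Real.cos δ < c ∧ {θ | t < peak α n θ} = {θ | c < Real.cos (θ - α)} by
    obtain ⟨c, hc, hset⟩ := this
    rw [hset]
    exact measure_lt_cos_sub_le hρ hα hδ hδπ hball hc
  have hcos (x : ℝ) : 0 ≤ (1 + Real.cos x) / 2 := by linarith [Real.neg_one_le_cos x]
  rcases eq_or_ne n 0 with rfl | hn
  · refine ⟨1, ?_, ?_⟩
    · simpa using Real.cos_lt_cos_of_nonneg_of_le_pi le_rfl (by linarith) hδ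
    · ext θ
      simp only [peak, pow_zero, mem_ofPred_eq] at ht ⊢
      constructor <;> intro h <;> linarith [Real.cos_le_one (θ - α)]
  · have ht0 : 0 ≤ t := (pow_nonneg (hcos δ) n).trans ht.le
    obtain ⟨s, hs, rfl⟩ : ∃ s, 0 ≤ s ∧ s ^ n = t :=
      ⟨_, Real.rpow_nonneg ht0 _, Real.rpow_inv_natCast_pow ht0 hn⟩
    refine ⟨2 * s - 1, ?_, ?_⟩
    · rw [pow_lt_pow_iff_left₀ (hcos δ) hs hn] at ht
      linarith
    · ext θ
      simp only [peak, mem_ofPred_eq, pow_lt_pow_iff_left₀ hs (hcos _) hn]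
      constructor <;> intro h <;> linarith

lemma integral_peak_le [IsFiniteMeasure ρ] (hρ : ρ (Ioc (-π) π)ᶜ = 0) (hα : |α| < π / 2)
    (hδ : 0 < δ) (hδπ : δ ≤ π / 2) (hε : 0 ≤ ε)
    (hball : ∀ r, 0 < r → r < δ → ρ (closedBall α r) ≤ ENNReal.ofReal ε * volume (closedBall α r))
    (n : ℕ) :
    ∫ θ, peak α n θ ∂ρ ≤
      ((1 + Real.cos δ) / 2) ^ n * ρ.real univ + ε * ∫ θ in Ioc (-π) π, peak α n θ := by
  have hcont := continuous_peak α n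
  refine integral_le_of_measure_lt_le (peak_nonneg α n) hcont.measurable
    (.mono' (integrable_const 1) hcont.aestronglyMeasurable (.of_forall fun θ => ?_))
    (hcont.integrableOn_Icc.mono_set Ioc_subset_Icc_self)
    (pow_nonneg (by linarith [Real.neg_one_le_cos δ]) n) hε
    fun t ht => measure_lt_peak_le hρ hα hδ hδπ hball ht
  rw [Real.norm_of_nonneg (peak_nonneg α n θ)]
  exact peak_le_one α n θ

end LevelSets

lemma map_exp_mul_I_restrict_Ioc (t : ℝ) :
    (volume.restrict (Ioc t (t + 2 * π))).map (fun θ : ℝ => exp (θ * I)) =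
      (volume.restrict (Ioc 0 (2 * π))).map (fun θ : ℝ => exp (θ * I)) := by
  have : Fact (0 < 2 * π) := ⟨Real.two_pi_pos⟩
  have hfactor : (fun θ : ℝ => exp (θ * I)) =
      (fun x : AddCircle (2 * π) => (AddCircle.toCircle x : ℂ)) ∘ (↑) := by
    ext θ
    simp [AddCircle.toCircle_apply_mk, Real.pi_ne_zero]
  have hmeas : Measurable fun x : AddCircle (2 * π) => (AddCircle.toCircle x : ℂ) :=
    (continuous_subtype_val.comp AddCircle.continuous_toCircle).measurable
  have hmk := AddCircle.measurePreserving_mk (2 * π) t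
  have hmk0 := AddCircle.measurePreserving_mk (2 * π) 0
  rw [zero_add] at hmk0
  rw [hfactor, ← Measure.map_map hmeas hmk.measurable, ← Measure.map_map hmeas
    hmk0.measurable, hmk.map_eq, hmk0.map_eq]

lemma mutuallySingular_map_arg {ν : Measure ℂ} (hν : ν {z | ‖z‖ ≠ 1} = 0) (hsing : ν ⟂ₘ mCirc) :
    ν.map arg ⟂ₘ volume := by
  obtain ⟨S, hS, hνS, hmS⟩ := hsing
  have hE : Measurable fun θ : ℝ => exp (θ * I) := by fun_prop
  refine ⟨(fun θ : ℝ => exp (θ * I)) ⁻¹' S ∪ (Ioc (-π) π)ᶜ,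
    (hE hS).union measurableSet_Ioc.compl, ?_, ?_⟩
  · rw [Measure.map_apply measurable_arg ((hE hS).union measurableSet_Ioc.compl)]
    refine measure_mono_null (fun z hz => ?_) (measure_union_null hνS hν)
    rcases hz with hz | hz
    · by_cases hz1 : ‖z‖ = 1
      · exact Or.inl (by simpa [exp_arg_mul_I_of_norm_eq_one hz1] using hz)
      · exact Or.inr hz1
    · exact absurd (arg_mem_Ioc z) hz
  · have hSc : (ENNReal.ofReal (2 * π))⁻¹ *
        (volume.restrict (Ioc 0 (2 * π))).map (fun θ : ℝ => exp (θ * I)) Sᶜ = 0 := hmS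
    rw [mul_eq_zero, ENNReal.inv_eq_zero, or_iff_right ENNReal.ofReal_ne_top,
      ← map_exp_mul_I_restrict_Ioc (-π), Measure.map_apply hE hS.compl,
      Measure.restrict_apply (hE hS.compl), show -π + 2 * π = π by ring] at hSc
    rwa [compl_union, compl_compl, ← preimage_compl]

lemma exists_mem_Ioo_tendsto_measure_closedBall_div_zero {ρ : Measure ℝ}
    [IsLocallyFiniteMeasure ρ] (hρ : ρ ⟂ₘ volume) {a b : ℝ} (hab : a < b) :
    ∃ α ∈ Ioo a b,
      Tendsto (fun r => ρ (closedBall α r) / volume (closedBall α r)) (𝓝[>] 0) (𝓝 0) := by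
  have : (ae (volume.restrict (Ioo a b))).NeBot := ae_restrict_neBot.2 (by simpa using hab)
  refine Eventually.exists (f := ae (volume.restrict (Ioo a b))) ?_
  filter_upwards [ae_restrict_mem measurableSet_Ioo, ae_restrict_of_ae
    (Besicovitch.ae_tendsto_rnDeriv ρ volume), ae_restrict_of_ae
    ((Measure.rnDeriv_eq_zero ρ volume).2 hρ)] with α hα hlim hzero
  exact ⟨hα, by simpa [hzero] using hlim⟩

lemma exists_forall_measure_closedBall_le {ρ : Measure ℝ} {α : ℝ}
    (h : Tendsto (fun r => ρ (closedBall α r) / volume (closedBall α r)) (𝓝[>] 0) (𝓝 0))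
    {ε : ℝ} (hε : 0 < ε) {δ₀ : ℝ} (hδ₀ : 0 < δ₀) :
    ∃ δ, 0 < δ ∧ δ ≤ δ₀ ∧ ∀ r, 0 < r → r < δ →
      ρ (closedBall α r) ≤ ENNReal.ofReal ε * volume (closedBall α r) := by
  obtain ⟨δ, hδ, hlt⟩ := (nhdsGT_basis 0).eventually_iff.1
    (h.eventually_lt_const (ENNReal.ofReal_pos.2 hε))
  refine ⟨min δ δ₀, lt_min hδ hδ₀, min_le_right _ _, fun r hr hrδ => ?_⟩
  have hvol : volume (closedBall α r) ≠ 0 := by simp [Real.volume_closedBall, hr]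
  exact (ENNReal.div_le_iff hvol measure_closedBall_lt_top.ne).1
    (hlt ⟨hr, hrδ.trans_le (min_le_left _ _)⟩).le

section Main

variable {ν : Measure ℂ} [IsFiniteMeasure ν]

lemma smallestEig_momMat_le_of_measure_closedBall_le (hν : ν {z | ‖z‖ ≠ 1} = 0) {α δ ε : ℝ}
    (hα : |α| < π / 2) (hδ : 0 < δ) (hδπ : δ ≤ π / 2) (hε : 0 ≤ ε)
    (hball : ∀ r, 0 < r → r < δ →
      ν.map arg (closedBall α r) ≤ ENNReal.ofReal ε * volume (closedBall α r)) (n : ℕ) :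
    smallestEig (momMat ν) n ≤
      (2 * n + 1) * ((1 + Real.cos δ) / 2) ^ n * ν.real univ + 2 * π * ε := by
  have hae : ∀ᵐ z ∂ν, ‖z‖ = 1 := ae_iff.2 hν
  have hρ : ν.map arg (Ioc (-π) π)ᶜ = 0 := by
    rw [Measure.map_apply measurable_arg measurableSet_Ioc.compl, preimage_compl,
      preimage_eq_univ_iff.2 (range_subset_iff.2 arg_mem_Ioc), compl_univ, measure_empty]
  have hT : (ν.map arg).real univ = ν.real univ := by
    simp [measureReal_def, Measure.map_apply measurable_arg MeasurableSet.univ]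
  have hC : (0 : ℝ) < (2 * n).choose n := by exact_mod_cast Nat.choose_pos (by omega)
  have h4 : (4 : ℝ) ^ n ≤ (2 * n + 1) * (2 * n).choose n := by
    exact_mod_cast Nat.four_pow_le_two_mul_add_one_mul_central_binom n
  have hq : 0 ≤ (1 + Real.cos δ) / 2 := by linarith [Real.neg_one_le_cos δ]
  set q := (1 + Real.cos δ) / 2
  calc smallestEig (momMat ν) n ≤ 4 ^ n * (∫ θ, peak α n θ ∂ν.map arg) / (2 * n).choose n := by
        simpa only [integral_normSq_sum_pow_eq_integral_map_arg hae, normSq_sum_peakVec_mul_exp,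
          integral_const_mul, sum_normSq_peakVec] using
          smallestEig_momMat_le hae (peakVec_ne_zero α n)
    _ ≤ 4 ^ n * (q ^ n * ν.real univ + ε * (2 * π * (2 * n).choose n / 4 ^ n)) /
          (2 * n).choose n := by
        rw [← hT, ← integral_peak α n]
        gcongr
        exact integral_peak_le hρ hα hδ hδπ hε hball n
    _ = 4 ^ n / (2 * n).choose n * q ^ n * ν.real univ + 2 * π * ε := by
        field_simp
    _ ≤ (2 * n + 1) * q ^ n * ν.real univ + 2 * π * ε := by
        gcongr
        rwa [div_le_iff₀ hC]

lemma eventually_smallestEig_momMat_lt (hν : ν {z | ‖z‖ ≠ 1} = 0) {α : ℝ} (hα : |α| < π / 2)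
    (hdens : Tendsto (fun r => ν.map arg (closedBall α r) / volume (closedBall α r)) (𝓝[>] 0)
      (𝓝 0))
    {ε : ℝ} (hε : 0 < ε) : ∀ᶠ n in atTop, smallestEig (momMat ν) n < ε := by
  obtain ⟨δ, hδ, hδπ, hball⟩ :=
    exists_forall_measure_closedBall_le hdens (by positivity : 0 < ε / (4 * π)) Real.pi_div_two_pos
  have hq0 : 0 ≤ (1 + Real.cos δ) / 2 := by linarith [Real.neg_one_le_cos δ]
  have hq1 : (1 + Real.cos δ) / 2 < 1 := by
    have := Real.cos_lt_cos_of_nonneg_of_le_pi le_rfl (by linarith) hδ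
    rw [Real.cos_zero] at this
    linarith
  set q := (1 + Real.cos δ) / 2
  have hpoly : Tendsto (fun n : ℕ => (2 * n + 1) * q ^ n) atTop (𝓝 0) := by
    simpa using (((tendsto_self_mul_const_pow_of_lt_one hq0 hq1).const_mul 2).add
      (tendsto_pow_atTop_nhds_zero_of_lt_one hq0 hq1)).congr fun n => by ring
  have hlim : Tendsto (fun n : ℕ => (2 * n + 1) * q ^ n * ν.real univ + 2 * π * (ε / (4 * π)))
      atTop (𝓝 (ε / 2)) := by
    convert (hpoly.mul_const (ν.real univ)).add_const (2 * π * (ε / (4 * π))) using 2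
    field_simp
    ring
  filter_upwards [hlim.eventually_lt_const (half_lt_self hε)] with n hn
  exact (smallestEig_momMat_le_of_measure_closedBall_le hν hα hδ hδπ (by positivity) hball
    n).trans_lt hn

end Main

theorem stmt15_general (νs : Measure ℂ) [IsFiniteMeasure νs]
    (hsupp : νs {z : ℂ | ‖z‖ ≠ 1} = 0)
    (hsing : νs.MutuallySingular mCirc) :
    Tendsto (smallestEig (momMat νs)) atTop (𝓝 0) := by
  obtain ⟨α, hα, hdens⟩ := exists_mem_Ioo_tendsto_measure_closedBall_div_zero
    (mutuallySingular_map_arg hsupp hsing) (neg_lt_self Real.pi_div_two_pos)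
  refine tendsto_order.2 ⟨fun a ha => .of_forall fun n => ?_, fun ε hε => ?_⟩
  · exact ha.trans_le (smallestEig_momMat_nonneg (ae_iff.2 hsupp) n)
  · exact eventually_smallestEig_momMat_lt hsupp (abs_lt.2 hα) hdens hε

/-- for a measure on the unit circle with infinite support which is
singular with respect to the normalized Lebesgue measure, `λ_n → 0`. -/
theorem stmt15 (νs : Measure ℂ) [IsFiniteMeasure νs]
    (hsupp : νs {z : ℂ | ‖z‖ ≠ 1} = 0)
    (hinf : ∀ s : Finset ℂ, νs ((s : Set ℂ))ᶜ ≠ 0)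
    (hsing : νs.MutuallySingular mCirc) :
    Tendsto (smallestEig (momMat νs)) atTop (𝓝 0) :=
  stmt15_general νs hsupp hsing
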